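/- arXiv:math/9905163 — 5 statements merged into one kernel-verified Lean document; each statement's English description precedes it below -/
import Mathlib

section
/- Let n ≥ 1, let U ⊆ ℂ^{n+1} be open, let ρ : U → ℝ be smooth, let p be a polynomial in n+1 variables with complex coefficients that is homogeneous of degree d ≥ 1, and let a : U → ℂ be a smooth function such that p((∂ρ/∂Z)(Z)) = a(Z)·ρ(Z) for all Z ∈ U. Then for every Z₀ ∈ U with ρ(Z₀) = 0, writing ξ := ((∂ρ/∂Z₁)(Z₀), …, (∂ρ/∂Z_{n+1})(Z₀)), the following hold: (i) Σ_j (∂p/∂x_j)(ξ) · (∂ρ/∂Z_j)(Z₀) = 0, so the vector v with components v_k = conj((∂p/∂x_k)(ξ)) lies in the complex tangent space of {ρ = 0} at Z₀; and (ii) for every w ∈ ℂ^{n+1} with Σ_k w_k (∂ρ/∂Z_k)(Z₀) = 0, one has Σ_{j,k} (∂²ρ/∂Z_j∂Z̄_k)(Z₀) · (∂p/∂x_j)(ξ) · conj(w_k) = 0; that is, v is a null vector of the Levi form of {ρ = 0} at Z₀. -/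
open ComplexConjugate

/-- The Wirtinger derivative `∂f/∂Z_j` of a function `f : ℂ^m → ℂ`,
defined as `(1/2)(∂f/∂x_j - i ∂f/∂y_j)` where `Z_j = x_j + i y_j`. -/
noncomputable def wirtingerZ {m : ℕ} (f : (Fin m → ℂ) → ℂ) (j : Fin m) (Z : Fin m → ℂ) : ℂ :=
  (1 / 2) * (fderiv ℝ f Z (Pi.single j 1) - Complex.I * fderiv ℝ f Z (Pi.single j Complex.I))

/-- The Wirtinger derivative `∂f/∂Z̄_j` of a function `f : ℂ^m → ℂ`,
defined as `(1/2)(∂f/∂x_j + i ∂f/∂y_j)`. -/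
noncomputable def wirtingerZbar {m : ℕ} (f : (Fin m → ℂ) → ℂ) (j : Fin m) (Z : Fin m → ℂ) : ℂ :=
  (1 / 2) * (fderiv ℝ f Z (Pi.single j 1) + Complex.I * fderiv ℝ f Z (Pi.single j Complex.I))

/-- `∂ρ/∂Z_j` for a real-valued function `ρ`. -/
noncomputable def wderiv {m : ℕ} (ρ : (Fin m → ℂ) → ℝ) (j : Fin m) (Z : Fin m → ℂ) : ℂ :=
  wirtingerZ (fun W => (ρ W : ℂ)) j Z

/-- The Levi matrix `∂²ρ/∂Z_j∂Z̄_k` for a real-valued function `ρ`. -/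
noncomputable def leviMatrix {m : ℕ} (ρ : (Fin m → ℂ) → ℝ) (j k : Fin m) (Z : Fin m → ℂ) : ℂ :=
  wirtingerZ (fun W => wirtingerZbar (fun W' => (ρ W' : ℂ)) k W) j Z

open MvPolynomial Finset

private lemma euler_mono {σ : Type*} [Fintype σ] [DecidableEq σ] (m : σ →₀ ℕ) (c : ℂ) (d : ℕ)
    (hm : (Finsupp.weight (1 : σ → ℕ)) m = d) :
    ∑ j, X j * pderiv j (monomial m c) = (d : ℂ) • monomial m c := by
  have key : ∀ j : σ, X j * pderiv j (monomial m c) = monomial m (c * m j) := by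
    intro j
    rw [pderiv_monomial]
    rcases Nat.eq_zero_or_pos (m j) with h0 | h1
    · simp [h0]
    · have hle : Finsupp.single j 1 ≤ m := Finsupp.single_le_iff.mpr h1
      rw [X, monomial_mul, one_mul, add_comm, tsub_add_cancel_of_le hle]
  have hsum : ∑ j : σ, (m j : ℂ) = (d : ℂ) := by
    have : ∑ j : σ, m j = d := by
      rw [← hm, Finsupp.weight_apply]
      simp [Finsupp.sum_fintype, mul_comm]
    exact_mod_cast congrArg (Nat.cast : ℕ → ℂ) this
  simp only [key, ← map_sum, ← Finset.mul_sum, hsum, smul_monomial]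
  rw [mul_comm, smul_eq_mul]

private lemma euler_eval {σ : Type*} [Fintype σ] [DecidableEq σ] (p : MvPolynomial σ ℂ) (d : ℕ)
    (h : p.IsHomogeneous d) (x : σ → ℂ) :
    ∑ j, eval x (pderiv j p) * x j = (d : ℂ) * eval x p := by
  have hp : ∑ j, X j * pderiv j p = (d : ℂ) • p := by
    conv_lhs => rw [p.as_sum]
    simp only [map_sum, Finset.mul_sum]
    rw [Finset.sum_comm]
    conv_rhs => rw [p.as_sum, Finset.smul_sum]
    exact Finset.sum_congr rfl fun m hm =>
      euler_mono m (coeff m p) d (h (mem_support_iff.mp hm))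
  have := congrArg (eval x) hp
  simp only [map_sum, smul_eq_mul, eval_mul, eval_X, smul_eval] at this
  rw [← this]
  exact Finset.sum_congr rfl fun j _ => mul_comm _ _

private lemma hasFDerivAt_mveval {m : ℕ} (p : MvPolynomial (Fin m) ℂ) (x : Fin m → ℂ) :
    HasFDerivAt (fun y : Fin m → ℂ => eval y p)
      (∑ j, eval x (pderiv j p) • (ContinuousLinearMap.proj j : (Fin m → ℂ) →L[ℂ] ℂ)) x := by
  induction p using MvPolynomial.induction_on with
  | C a =>
    have h0 : (∑ j, eval x (pderiv j (C a : MvPolynomial (Fin m) ℂ)) •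
        (ContinuousLinearMap.proj j : (Fin m → ℂ) →L[ℂ] ℂ)) = 0 := by
      simp only [pderiv_C, map_zero]
      exact Finset.sum_eq_zero fun j _ => zero_smul ℂ (A := (Fin m → ℂ) →L[ℂ] ℂ) _
    rw [h0]
    simpa using hasFDerivAt_const (a : ℂ) x
  | add p q hp hq =>
    have h : HasFDerivAt (fun y : Fin m → ℂ => eval y p + eval y q) _ x := hp.add hq
    have hfun : (fun y : Fin m → ℂ => eval y p + eval y q)
        = fun y : Fin m → ℂ => eval y (p + q) := by funext y; simp
    rw [hfun] at h
    refine h.congr_fderiv ?_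
    ext v
    simp [add_mul, Finset.sum_add_distrib]
  | mul_X p i hp =>
    have hXi := (ContinuousLinearMap.proj i : (Fin m → ℂ) →L[ℂ] ℂ).hasFDerivAt (x := x)
    have h : HasFDerivAt (fun y : Fin m → ℂ => eval y p * (ContinuousLinearMap.proj i : (Fin m → ℂ) →L[ℂ] ℂ) y) _ x := hp.mul hXi
    have hfun : (fun y : Fin m → ℂ => eval y p * (ContinuousLinearMap.proj i : (Fin m → ℂ) →L[ℂ] ℂ) y)
        = fun y : Fin m → ℂ => eval y (p * X i) := by
      funext y; simp [ContinuousLinearMap.proj_apply]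
    rw [hfun] at h
    refine h.congr_fderiv ?_
    ext v
    simp only [ContinuousLinearMap.sum_apply, ContinuousLinearMap.smul_apply,
      ContinuousLinearMap.proj_apply, ContinuousLinearMap.add_apply, map_mul,
      Derivation.leibniz, pderiv_X, smul_eq_mul, map_add, eval_mul, eval_X,
      Pi.single_apply, eval_C]
    rw [Finset.sum_congr rfl (fun j _ => (by split_ifs <;> simp <;> ring :
      ((eval x) p * (eval x) ((if i = j then 1 else 0 : MvPolynomial (Fin m) ℂ)) + x i * (eval x) ((pderiv j) p)) * v j
        = (if i = j then (eval x) p * v j else 0) + x i * ((eval x) ((pderiv j) p) * v j)))]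
    rw [Finset.sum_add_distrib, Finset.sum_ite_eq, ← Finset.mul_sum]
    simp

/-- If `p((∂ρ/∂Z)(Z)) = a(Z)·ρ(Z)` on `U` for a homogeneous polynomial `p` of degree `d ≥ 1`,
then at every point `Z₀` of `{ρ = 0}`, with `ξ = (∂ρ/∂Z)(Z₀)`:
(i) `Σ_j (∂p/∂x_j)(ξ)·(∂ρ/∂Z_j)(Z₀) = 0`, so the vector `v` with `v_k = conj((∂p/∂x_k)(ξ))`
lies in the complex tangent space; and
(ii) `(∂p/∂x)(ξ)` is annihilated by the Levi matrix against every complex tangent vector `w`. -/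
theorem characteristic_gradient_is_levi_null_vector
    (n : ℕ) (hn : 1 ≤ n)
    (U : Set (Fin (n + 1) → ℂ)) (hU : IsOpen U)
    (ρ : (Fin (n + 1) → ℂ) → ℝ) (hρ : ContDiffOn ℝ (⊤ : ℕ∞) ρ U)
    (p : MvPolynomial (Fin (n + 1)) ℂ)
    (d : ℕ) (hd : 1 ≤ d) (hhom : p.IsHomogeneous d)
    (a : (Fin (n + 1) → ℂ) → ℂ) (ha : ContDiffOn ℝ (⊤ : ℕ∞) a U)
    (hfact : ∀ Z ∈ U, MvPolynomial.eval (fun j => wderiv ρ j Z) p = a Z * (ρ Z : ℂ))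
    (Z₀ : Fin (n + 1) → ℂ) (hZ₀ : Z₀ ∈ U) (hρZ₀ : ρ Z₀ = 0)
    (ξ : Fin (n + 1) → ℂ) (hξ : ξ = fun j => wderiv ρ j Z₀) :
    (∑ j, MvPolynomial.eval ξ (MvPolynomial.pderiv j p) * wderiv ρ j Z₀) = 0 ∧
    ∀ w : Fin (n + 1) → ℂ, (∑ k, w k * wderiv ρ k Z₀) = 0 →
      (∑ j, ∑ k, leviMatrix ρ j k Z₀ *
        MvPolynomial.eval ξ (MvPolynomial.pderiv j p) * conj (w k)) = 0 := by
  classical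
  -- notation
  set ρc : (Fin (n + 1) → ℂ) → ℂ := fun W => (ρ W : ℂ) with hρc_def
  have hρc : ContDiffOn ℝ (⊤ : ℕ∞) ρc U := Complex.ofRealCLM.contDiff.comp_contDiffOn hρ
  have hUnhds : U ∈ nhds Z₀ := hU.mem_nhds hZ₀
  set Φ : (Fin (n + 1) → ℂ) → (Fin (n + 1) → ℂ) →L[ℝ] ℂ := fderiv ℝ ρc with hΦ_def
  have hev : ∀ᶠ W in nhds Z₀, HasFDerivAt ρc (Φ W) W := by
    filter_upwards [hU.eventually_mem hZ₀] with W hW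
    exact ((hρc.contDiffAt (hU.mem_nhds hW)).differentiableAt (by simp)).hasFDerivAt
  have hΦc : ContDiffAt ℝ 1 Φ Z₀ := (hρc.contDiffAt hUnhds).fderiv_right (by norm_cast)
  set B := fderiv ℝ Φ Z₀ with hB_def
  have hB : HasFDerivAt Φ B Z₀ := (hΦc.differentiableAt one_ne_zero).hasFDerivAt
  have hBsymm : ∀ u v, B u v = B v u :=
    fun u v => second_derivative_symmetric_of_eventually hev hB u v
  -- unit directions
  set e : Fin (n + 1) → (Fin (n + 1) → ℂ) := fun k => Pi.single k (1 : ℂ) with he_def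
  set ε : Fin (n + 1) → (Fin (n + 1) → ℂ) := fun k => Pi.single k Complex.I with hε_def
  -- derivative of W ↦ Φ W u
  have happly : ∀ u : Fin (n + 1) → ℂ, HasFDerivAt (fun W => Φ W u)
      ((ContinuousLinearMap.apply ℝ ℂ u).comp B) Z₀ :=
    fun u => (ContinuousLinearMap.apply ℝ ℂ u).hasFDerivAt.comp Z₀ hB
  -- derivative of g_j = wderiv ρ j
  set L : Fin (n + 1) → (Fin (n + 1) → ℂ) →L[ℝ] ℂ := fun j =>
    (1/2 : ℂ) • (((ContinuousLinearMap.apply ℝ ℂ (e j)).comp B) -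
      Complex.I • ((ContinuousLinearMap.apply ℝ ℂ (ε j)).comp B)) with hL_def
  have hLval : ∀ j v, L j v = (1/2 : ℂ) * (B v (e j) - Complex.I * B v (ε j)) := by
    intro j v
    simp only [hL_def, ContinuousLinearMap.smul_apply, ContinuousLinearMap.sub_apply,
      ContinuousLinearMap.comp_apply, ContinuousLinearMap.apply_apply, smul_eq_mul]
  have hg : ∀ j, HasFDerivAt (fun W => wderiv ρ j W) (L j) Z₀ := by
    intro j
    have h1 := happly (e j)
    have h2 := (happly (ε j)).const_mul Complex.I
    have h3 := (h1.sub h2).const_mul (1/2 : ℂ)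
    exact h3
  -- derivative of h_k = wirtingerZbar ρc k
  set M : Fin (n + 1) → (Fin (n + 1) → ℂ) →L[ℝ] ℂ := fun k =>
    (1/2 : ℂ) • (((ContinuousLinearMap.apply ℝ ℂ (e k)).comp B) +
      Complex.I • ((ContinuousLinearMap.apply ℝ ℂ (ε k)).comp B)) with hM_def
  have hMval : ∀ k v, M k v = (1/2 : ℂ) * (B v (e k) + Complex.I * B v (ε k)) := by
    intro k v
    simp only [hM_def, ContinuousLinearMap.smul_apply, ContinuousLinearMap.add_apply,
      ContinuousLinearMap.comp_apply, ContinuousLinearMap.apply_apply, smul_eq_mul]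
  have hh : ∀ k, HasFDerivAt (fun W => wirtingerZbar ρc k W) (M k) Z₀ := by
    intro k
    have h1 := happly (e k)
    have h2 := (happly (ε k)).const_mul Complex.I
    have h3 := (h1.add h2).const_mul (1/2 : ℂ)
    exact h3
  -- the Levi matrix in terms of B, and "Zbar-derivative of g_j" Λ
  set Λ : Fin (n + 1) → Fin (n + 1) → ℂ := fun j k => (1/2 : ℂ) * (L j (e k) + Complex.I * L j (ε k))
    with hΛ_def
  have hlevi : ∀ j k, leviMatrix ρ j k Z₀ = Λ j k := by
    intro j k
    have hfd := (hh k).fderiv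
    show (1/2 : ℂ) * (fderiv ℝ (fun W => wirtingerZbar ρc k W) Z₀ (e j)
        - Complex.I * fderiv ℝ (fun W => wirtingerZbar ρc k W) Z₀ (ε j)) = Λ j k
    rw [hfd]
    simp only [hΛ_def, hMval, hLval]
    have h1 := hBsymm (e j) (e k)
    have h2 := hBsymm (e j) (ε k)
    have h3 := hBsymm (ε j) (e k)
    have h4 := hBsymm (ε j) (ε k)
    linear_combination (1/4 : ℂ) * h1 + (Complex.I/4) * h2 - (Complex.I/4) * h3 - (Complex.I^2/4) * h4
  -- the polynomial-composition function F
  set Q : Fin (n + 1) → ℂ := fun j => eval ξ (pderiv j p) with hQ_def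
  set G : (Fin (n + 1) → ℂ) →L[ℝ] (Fin (n + 1) → ℂ) := ContinuousLinearMap.pi L with hG_def
  have hGfd : HasFDerivAt (fun W => (fun j => wderiv ρ j W)) G Z₀ := by
    rw [hG_def]
    exact hasFDerivAt_pi.mpr hg
  set DP : (Fin (n + 1) → ℂ) →L[ℂ] ℂ :=
    ∑ j, eval (fun j => wderiv ρ j Z₀) (pderiv j p) • ContinuousLinearMap.proj j with hDP_def
  have hF : HasFDerivAt (fun W => eval (fun j => wderiv ρ j W) p)
      ((DP.restrictScalars ℝ).comp G) Z₀ :=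
    ((hasFDerivAt_mveval p _).restrictScalars ℝ).comp Z₀ hGfd
  -- the product side
  have hda : DifferentiableAt ℝ a Z₀ := ((ha.contDiffAt hUnhds).differentiableAt (by simp))
  have hdρc : DifferentiableAt ℝ ρc Z₀ := ((hρc.contDiffAt hUnhds).differentiableAt (by simp))
  have hmul : HasFDerivAt (fun W => a W * ρc W)
      (a Z₀ • Φ Z₀ + ρc Z₀ • fderiv ℝ a Z₀) Z₀ :=
    hda.hasFDerivAt.mul hdρc.hasFDerivAt
  have hFeq : (fun W => eval (fun j => wderiv ρ j W) p) =ᶠ[nhds Z₀] (fun W => a W * ρc W) := by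
    filter_upwards [hUnhds] with W hW
    exact hfact W hW
  have hF2 : HasFDerivAt (fun W => eval (fun j => wderiv ρ j W) p)
      (a Z₀ • Φ Z₀ + ρc Z₀ • fderiv ℝ a Z₀) Z₀ := hmul.congr_of_eventuallyEq hFeq
  have hD : (DP.restrictScalars ℝ).comp G = a Z₀ • Φ Z₀ + ρc Z₀ • fderiv ℝ a Z₀ :=
    hF.unique hF2
  have hρc0 : ρc Z₀ = 0 := by show ((ρ Z₀ : ℝ) : ℂ) = 0; exact_mod_cast hρZ₀
  -- value of DP ∘ G
  have hDval : ∀ v, ((DP.restrictScalars ℝ).comp G) v = ∑ j, Q j * L j v := by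
    intro v
    simp only [ContinuousLinearMap.comp_apply, ContinuousLinearMap.coe_restrictScalars',
      hDP_def, ContinuousLinearMap.sum_apply, ContinuousLinearMap.smul_apply,
      ContinuousLinearMap.proj_apply, smul_eq_mul]
    refine Finset.sum_congr rfl fun j _ => ?_
    rw [hQ_def, hξ]
    simp [hG_def]
  have hDval2 : ∀ v, ((DP.restrictScalars ℝ).comp G) v = a Z₀ * Φ Z₀ v := by
    intro v
    rw [hD]
    simp [hρc0, smul_eq_mul]
  -- realness of Φ Z₀
  have hreal : ∀ v, conj (Φ Z₀ v) = Φ Z₀ v := by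
    intro v
    have hdρ : DifferentiableAt ℝ ρ Z₀ := ((hρ.contDiffAt hUnhds).differentiableAt (by simp))
    have : Φ Z₀ = Complex.ofRealCLM.comp (fderiv ℝ ρ Z₀) := by
      rw [hΦ_def]
      have : ρc = Complex.ofRealCLM ∘ ρ := rfl
      rw [this, fderiv_comp Z₀ Complex.ofRealCLM.differentiableAt hdρ,
        Complex.ofRealCLM.fderiv]
    rw [this]
    simp [Complex.conj_ofReal]
  have hξval : ∀ k, ξ k = (1/2 : ℂ) * (Φ Z₀ (e k) - Complex.I * Φ Z₀ (ε k)) := by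
    intro k
    rw [hξ]
    rfl
  have hconjξ : ∀ k, conj (ξ k) = (1/2 : ℂ) * (Φ Z₀ (e k) + Complex.I * Φ Z₀ (ε k)) := by
    intro k
    rw [hξval k]
    simp only [map_mul, map_sub, map_add, Complex.conj_I, hreal, map_div₀, map_one, map_ofNat]
    ring
  -- the key identity: ∑_j Q j * Λ j k = a Z₀ * conj (ξ k)
  have hkey : ∀ k, ∑ j, Q j * Λ j k = a Z₀ * conj (ξ k) := by
    intro k
    have h1 : ∑ j, Q j * L j (e k) = a Z₀ * Φ Z₀ (e k) := by
      rw [← hDval, hDval2]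
    have h2 : ∑ j, Q j * L j (ε k) = a Z₀ * Φ Z₀ (ε k) := by
      rw [← hDval, hDval2]
    have hstep : ∑ j, Q j * Λ j k
        = (1/2 : ℂ) * ((∑ j, Q j * L j (e k)) + Complex.I * (∑ j, Q j * L j (ε k))) := by
      rw [Finset.sum_congr rfl (fun j _ => (by simp only [hΛ_def]; ring :
        Q j * Λ j k = (1/2 : ℂ) * (Q j * L j (e k)) + (1/2 : ℂ) * Complex.I * (Q j * L j (ε k))))]
      rw [Finset.sum_add_distrib, ← Finset.mul_sum, ← Finset.mul_sum]
      ring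
    rw [hstep, h1, h2, hconjξ]
    ring
  constructor
  · -- part (i) : Euler
    have h0 : eval ξ p = 0 := by
      rw [hξ, hfact Z₀ hZ₀, hρZ₀]
      simp
    have := euler_eval p d hhom ξ
    rw [h0, mul_zero] at this
    rw [← this]
    exact Finset.sum_congr rfl fun j _ => by rw [hξ]
  · -- part (ii)
    intro w hw
    have hwξ : ∑ k, w k * ξ k = 0 := by
      rw [← hw]
      exact Finset.sum_congr rfl fun k _ => by rw [hξ]
    calc ∑ j, ∑ k, leviMatrix ρ j k Z₀ * Q j * conj (w k)
        = ∑ k, ∑ j, Λ j k * Q j * conj (w k) := by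
          rw [Finset.sum_comm]
          exact Finset.sum_congr rfl fun k _ => Finset.sum_congr rfl fun j _ => by
            rw [hlevi]
      _ = ∑ k, (∑ j, Q j * Λ j k) * conj (w k) := by
          refine Finset.sum_congr rfl fun k _ => ?_
          rw [Finset.sum_mul]
          exact Finset.sum_congr rfl fun j _ => by ring
      _ = ∑ k, (a Z₀ * conj (ξ k)) * conj (w k) := by
          exact Finset.sum_congr rfl fun k _ => by rw [hkey]
      _ = a Z₀ * conj (∑ k, w k * ξ k) := by
          rw [map_sum, Finset.mul_sum]
          exact Finset.sum_congr rfl fun k _ => by rw [map_mul]; ring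
      _ = 0 := by rw [hwξ]; simp
end

section
/- Let m ≥ 1 and let D = diag(λ₁,…,λ_m) be a real diagonal m×m matrix with λ₁ > λ₂ > … > λ_m > 0 (distinct positive entries). If V is a complex m×m unitary matrix satisfying VᵀDV = D, then V is a diagonal matrix each of whose diagonal entries is 1 or −1. -/
open Matrix ComplexConjugate

/-!
Unitarity turns `VᵀDV = D` into `VᵀD = DV*`, i.e. `V j i * λ j = λ i * conj (V j i)`.
Comparing moduli kills the off-diagonal entries since the `λ` are distinct, and for `i = j`
the entry `V i i` is real; a real diagonal entry of a diagonal unitary matrix is `±1`.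
-/

namespace Complex

theorem eq_zero_of_mul_ofReal_eq_ofReal_mul_conj {z : ℂ} {a b : ℝ} (ha : 0 ≤ a) (hb : 0 ≤ b)
    (hab : a ≠ b) (h : z * a = b * conj z) : z = 0 := by
  have hnorm : ‖z‖ * a = b * ‖z‖ := by
    simpa [norm_mul, norm_real, norm_conj, abs_of_nonneg ha, abs_of_nonneg hb] using
      congrArg norm h
  have : ‖z‖ * (a - b) = 0 := by linarith
  simpa [sub_ne_zero.mpr hab] using this

theorem conj_eq_of_mul_ofReal_eq_ofReal_mul_conj {z : ℂ} {a : ℝ} (ha : a ≠ 0)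
    (h : z * a = a * conj z) : conj z = z :=
  (mul_left_cancel₀ (ofReal_ne_zero.mpr ha) (by rw [← h, mul_comm])).symm

end Complex

namespace Matrix

variable {n α : Type*} [Fintype n] [DecidableEq n]

theorem transpose_mul_eq_mul_star_of_mem_unitaryGroup [CommRing α] [StarRing α]
    {V A B : Matrix n n α} (hV : V ∈ unitaryGroup n α) (h : Vᵀ * A * V = B) :
    Vᵀ * A = B * star V := by
  rw [← h, mul_assoc, mem_unitaryGroup_iff.mp hV, mul_one]

theorem IsDiag.star_apply_mul_apply_self [CommRing α] [StarRing α] {V : Matrix n n α}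
    (hdiag : V.IsDiag) (hV : V ∈ unitaryGroup n α) (i : n) : star (V i i) * V i i = 1 := by
  have h := mem_unitaryGroup_iff'.mp hV
  rw [← hdiag.diagonal_diag, star_eq_conjTranspose, diagonal_conjTranspose,
    diagonal_mul_diagonal, ← diagonal_one, diagonal_eq_diagonal_iff] at h
  exact h i

theorem apply_mul_eq_mul_conj_of_transpose_mul_diagonal {V : Matrix n n ℂ} {d : n → ℝ}
    (h : Vᵀ * diagonal (fun i => (d i : ℂ)) = diagonal (fun i => (d i : ℂ)) * star V)
    (i j : n) : V j i * d j = d i * conj (V j i) := by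
  simpa [mul_diagonal, diagonal_mul, star_apply] using congrFun (congrFun h i) j

theorem isDiag_of_transpose_mul_diagonal_eq {V : Matrix n n ℂ} {d : n → ℝ}
    (hd : Function.Injective d) (hnonneg : ∀ i, 0 ≤ d i)
    (h : Vᵀ * diagonal (fun i => (d i : ℂ)) = diagonal (fun i => (d i : ℂ)) * star V) :
    V.IsDiag := fun i j hij =>
  Complex.eq_zero_of_mul_ofReal_eq_ofReal_mul_conj (hnonneg i) (hnonneg j) (hd.ne hij)
    (apply_mul_eq_mul_conj_of_transpose_mul_diagonal h j i)

end Matrix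

theorem unitary_preserving_distinct_positive_diagonal_general
    (m : ℕ)
    (lam : Fin m → ℝ)
    (hpos : ∀ i, 0 < lam i)
    (hstrict : ∀ i j : Fin m, i < j → lam j < lam i)
    (V : Matrix (Fin m) (Fin m) ℂ) (hV : V ∈ Matrix.unitaryGroup (Fin m) ℂ)
    (hVD : Vᵀ * Matrix.diagonal (fun i => (lam i : ℂ)) * V
          = Matrix.diagonal (fun i => (lam i : ℂ))) :
    (∀ i j : Fin m, i ≠ j → V i j = 0) ∧ (∀ i : Fin m, V i i = 1 ∨ V i i = -1) := by
  have hcomm := transpose_mul_eq_mul_star_of_mem_unitaryGroup hV hVD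
  have hdiag : V.IsDiag := isDiag_of_transpose_mul_diagonal_eq
    (StrictAnti.injective hstrict) (fun i => (hpos i).le) hcomm
  refine ⟨hdiag, fun i => mul_self_eq_one_iff.mp ?_⟩
  have hreal : conj (V i i) = V i i := Complex.conj_eq_of_mul_ofReal_eq_ofReal_mul_conj
    (hpos i).ne' (apply_mul_eq_mul_conj_of_transpose_mul_diagonal hcomm i i)
  simpa only [Complex.star_def, hreal] using hdiag.star_apply_mul_apply_self hV i

/-- If `D = diag(λ₁,…,λ_m)` with `λ₁ > … > λ_m > 0` and `V` is unitary with
`VᵀDV = D`, then `V` is diagonal with diagonal entries `±1`. -/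
theorem unitary_preserving_distinct_positive_diagonal
    (m : ℕ) (hm : 1 ≤ m)
    (lam : Fin m → ℝ)
    (hpos : ∀ i, 0 < lam i)
    (hstrict : ∀ i j : Fin m, i < j → lam j < lam i)
    (V : Matrix (Fin m) (Fin m) ℂ) (hV : V ∈ Matrix.unitaryGroup (Fin m) ℂ)
    (hVD : Vᵀ * Matrix.diagonal (fun i => (lam i : ℂ)) * V
          = Matrix.diagonal (fun i => (lam i : ℂ))) :
    (∀ i j : Fin m, i ≠ j → V i j = 0) ∧ (∀ i : Fin m, V i i = 1 ∨ V i i = -1) :=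
  unitary_preserving_distinct_positive_diagonal_general m lam hpos hstrict V hV hVD
end

section
/- The set H′ of complex 4×4 matrices which, in (1+3)×(1+3) block form, equal [[v, 0],[c, k]] with v ∈ ℝ, v ≠ 0, k ∈ K, and c ∈ ℂ³ satisfying Re c = k e₁ − v e₁, is a subgroup of GL(4, ℂ); moreover the subset H ⊆ H′ of such matrices with v > 0 is also a subgroup of GL(4, ℂ). -/
open Matrix

/-- The bilinear form of the light cone: `Λ = [[0,0,−1],[0,1,0],[−1,0,0]]`. -/
def lightConeLambda : Matrix (Fin 3) (Fin 3) ℝ := !![0, 0, -1; 0, 1, 0; -1, 0, 0]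

/-- The group `K = {k ∈ GL(3,ℝ) : kᵀΛk = Λ, det k = 1}`. -/
def Kgroup : Set (Matrix (Fin 3) (Fin 3) ℝ) :=
  {k | kᵀ * lightConeLambda * k = lightConeLambda ∧ k.det = 1}

/-- The first standard basis vector of `ℝ³`. -/
def e₁ : Fin 3 → ℝ := Pi.single 0 1

/-- The set of complex 4×4 matrices in block form `[[v,0],[c,k]]` with `v ∈ ℝ`,
`k ∈ K`, and `Re c = k e₁ − v e₁`, together with the condition `P v` on `v`. -/
def frameSet (P : ℝ → Prop) : Set (Matrix (Fin 1 ⊕ Fin 3) (Fin 1 ⊕ Fin 3) ℂ) :=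
  {M | ∃ (v : ℝ) (c : Fin 3 → ℂ) (k : Matrix (Fin 3) (Fin 3) ℝ),
    P v ∧ k ∈ Kgroup ∧
    (∀ i : Fin 3, (c i).re = k.mulVec e₁ i - v * e₁ i) ∧
    M = Matrix.fromBlocks (Matrix.of fun _ _ => (v : ℂ)) 0
          (Matrix.of fun i _ => c i) (k.map (fun r => (r : ℂ)))}

/-!
Block multiplication gives `[[v,0],[c,k]] * [[v',0],[c',k']] = [[v v',0],[v' c + k c',k k']]`.
Since `k` is real, `Re (v' c + k c') = v' Re c + k Re c' = v' (k e₁ - v e₁) + k (k' e₁ - v' e₁)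
= k k' e₁ - v v' e₁`, so the constraint on `Re c` is preserved. The inverse of `[[v,0],[c,k]]`
is `[[v⁻¹,0],[-v⁻¹ k⁻¹ c,k⁻¹]]`, which satisfies the constraint by the same computation.
-/

namespace Kgroup

theorem one_mem : (1 : Matrix (Fin 3) (Fin 3) ℝ) ∈ Kgroup := by
  simp [Kgroup]

theorem mul_mem {k k' : Matrix (Fin 3) (Fin 3) ℝ} (hk : k ∈ Kgroup) (hk' : k' ∈ Kgroup) :
    k * k' ∈ Kgroup := by
  refine ⟨?_, by rw [det_mul, hk.2, hk'.2, one_mul]⟩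
  calc (k * k')ᵀ * lightConeLambda * (k * k') = k'ᵀ * (kᵀ * lightConeLambda * k) * k' := by
        simp only [transpose_mul, Matrix.mul_assoc]
    _ = lightConeLambda := by rw [hk.1, hk'.1]

theorem mul_inv_cancel {k : Matrix (Fin 3) (Fin 3) ℝ} (hk : k ∈ Kgroup) : k * k⁻¹ = 1 :=
  mul_nonsing_inv k (by simp [hk.2])

theorem inv_mul_cancel {k : Matrix (Fin 3) (Fin 3) ℝ} (hk : k ∈ Kgroup) : k⁻¹ * k = 1 :=
  nonsing_inv_mul k (by simp [hk.2])

theorem inv_mem {k : Matrix (Fin 3) (Fin 3) ℝ} (hk : k ∈ Kgroup) : k⁻¹ ∈ Kgroup := by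
  refine ⟨?_, by rw [det_nonsing_inv, hk.2, Ring.inverse_one]⟩
  calc k⁻¹ᵀ * lightConeLambda * k⁻¹ = k⁻¹ᵀ * (kᵀ * lightConeLambda * k) * k⁻¹ := by rw [hk.1]
    _ = (k * k⁻¹)ᵀ * lightConeLambda * (k * k⁻¹) := by
        simp only [transpose_mul, Matrix.mul_assoc]
    _ = lightConeLambda := by simp [mul_inv_cancel hk]

end Kgroup

section FrameMatrix

variable {n : Type*}

def frameMatrix (v : ℝ) (c : n → ℂ) (k : Matrix n n ℝ) : Matrix (Fin 1 ⊕ n) (Fin 1 ⊕ n) ℂ :=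
  fromBlocks (of fun _ _ => (v : ℂ)) 0 (of fun i _ => c i) (k.map (fun r => (r : ℂ)))

theorem map_ofReal_mul [Fintype n] (k k' : Matrix n n ℝ) :
    (k * k').map (fun r => (r : ℂ)) = k.map (fun r => (r : ℂ)) * k'.map (fun r => (r : ℂ)) :=
  Matrix.map_mul (f := Complex.ofRealHom)

theorem re_map_ofReal_mulVec [Fintype n] (k : Matrix n n ℝ) (c : n → ℂ) (i : n) :
    ((k.map (fun r => (r : ℂ)) *ᵥ c) i).re = (k *ᵥ fun j => (c j).re) i := by
  simp [mulVec, dotProduct, Complex.re_sum]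

theorem frameMatrix_one_zero_one [DecidableEq n] : frameMatrix 1 (0 : n → ℂ) 1 = 1 := by
  rw [frameMatrix, ← fromBlocks_one]
  congr
  · ext i j
    simp [one_apply, Subsingleton.elim i j]
  · ext i j
    simp [one_apply, apply_ite]

theorem frameMatrix_mul [Fintype n] (v v' : ℝ) (c c' : n → ℂ) (k k' : Matrix n n ℝ) :
    frameMatrix v c k * frameMatrix v' c' k' =
      frameMatrix (v * v') ((v' : ℂ) • c + k.map (fun r => (r : ℂ)) *ᵥ c') (k * k') := by
  rw [frameMatrix, frameMatrix, frameMatrix, fromBlocks_multiply, map_ofReal_mul]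
  congr 1
  · ext i j
    simp [mul_apply]
  · simp
  · ext i j
    simp [mul_apply, mulVec, dotProduct, mul_comm]
  · simp

theorem frameMatrix_mul_frameMatrix_inv [Fintype n] [DecidableEq n] {v : ℝ} (c : n → ℂ)
    {k : Matrix n n ℝ} (hv : v ≠ 0) (hk : k * k⁻¹ = 1) :
    frameMatrix v c k * frameMatrix v⁻¹ (-(v : ℂ)⁻¹ • (k⁻¹.map (fun r => (r : ℂ)) *ᵥ c)) k⁻¹ = 1 := by
  rw [frameMatrix_mul, mul_inv_cancel₀ hv, hk, mulVec_smul, mulVec_mulVec, ← map_ofReal_mul, hk,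
    Matrix.map_one _ Complex.ofReal_zero Complex.ofReal_one, one_mulVec, Complex.ofReal_inv,
    neg_smul, add_neg_cancel, frameMatrix_one_zero_one]

theorem re_condition_mul [Fintype n] {e : n → ℝ} {v v' : ℝ} {c c' : n → ℂ} {k k' : Matrix n n ℝ}
    (hc : ∀ i, (c i).re = (k *ᵥ e) i - v * e i) (hc' : ∀ i, (c' i).re = (k' *ᵥ e) i - v' * e i)
    (i : n) :
    (((v' : ℂ) • c + k.map (fun r => (r : ℂ)) *ᵥ c') i).re = ((k * k') *ᵥ e) i - v * v' * e i := by
  have hre : (fun j => (c' j).re) = k' *ᵥ e - v' • e := funext fun j => by simp [hc' j]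
  rw [Pi.add_apply, Complex.add_re, Pi.smul_apply, smul_eq_mul, Complex.re_ofReal_mul, hc i,
    re_map_ofReal_mulVec, hre, mulVec_sub, mulVec_smul, mulVec_mulVec]
  simp only [Pi.sub_apply, Pi.smul_apply, smul_eq_mul]
  ring

theorem re_condition_inv [Fintype n] [DecidableEq n] {e : n → ℝ} {v : ℝ} {c : n → ℂ}
    {k : Matrix n n ℝ} (hv : v ≠ 0) (hk : k⁻¹ * k = 1)
    (hc : ∀ i, (c i).re = (k *ᵥ e) i - v * e i) (i : n) :
    ((-(v : ℂ)⁻¹ • (k⁻¹.map (fun r => (r : ℂ)) *ᵥ c)) i).re = (k⁻¹ *ᵥ e) i - v⁻¹ * e i := by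
  have hre : (fun j => (c j).re) = k *ᵥ e - v • e := funext fun j => by simp [hc j]
  rw [Pi.smul_apply, smul_eq_mul, ← Complex.ofReal_inv, ← Complex.ofReal_neg,
    Complex.re_ofReal_mul, re_map_ofReal_mulVec, hre, mulVec_sub, mulVec_smul, mulVec_mulVec, hk,
    one_mulVec]
  simp only [Pi.sub_apply, Pi.smul_apply, smul_eq_mul]
  field_simp
  ring

end FrameMatrix

variable {P : ℝ → Prop}

theorem one_mem_frameSet (h : P 1) : 1 ∈ frameSet P :=
  ⟨1, 0, 1, h, Kgroup.one_mem, fun i => by simp, frameMatrix_one_zero_one.symm⟩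

theorem mul_mem_frameSet (hP : ∀ v w, P v → P w → P (v * w)) {A B} (hA : A ∈ frameSet P)
    (hB : B ∈ frameSet P) : A * B ∈ frameSet P := by
  obtain ⟨v, c, k, hv, hk, hc, rfl⟩ := hA
  obtain ⟨v', c', k', hv', hk', hc', rfl⟩ := hB
  exact ⟨_, _, _, hP v v' hv hv', Kgroup.mul_mem hk hk', re_condition_mul hc hc',
    frameMatrix_mul v v' c c' k k'⟩

theorem isUnit_and_inv_mem_frameSet (hP0 : ∀ v, P v → v ≠ 0) (hPinv : ∀ v, P v → P v⁻¹) {A}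
    (hA : A ∈ frameSet P) : IsUnit A ∧ A⁻¹ ∈ frameSet P := by
  obtain ⟨v, c, k, hv, hk, hc, rfl⟩ := hA
  have hinv := frameMatrix_mul_frameMatrix_inv c (hP0 v hv) (Kgroup.mul_inv_cancel hk)
  refine ⟨IsUnit.of_mul_eq_one _ hinv, ?_⟩
  change (frameMatrix v c k)⁻¹ ∈ frameSet P
  rw [inv_eq_right_inv hinv]
  exact ⟨_, _, _, hPinv v hv, Kgroup.inv_mem hk,
    re_condition_inv (hP0 v hv) (Kgroup.inv_mul_cancel hk) hc, rfl⟩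

/-- The frame group `H′` of the tube over the light cone (block matrices
`[[v,0],[c,k]]` with `v ≠ 0`, `k ∈ K`, `Re c = k e₁ − v e₁`) is a subgroup of
`GL(4,ℂ)`, and so is the subset `H` where `v > 0`. -/
theorem frame_set_is_subgroup :
    ((1 : Matrix (Fin 1 ⊕ Fin 3) (Fin 1 ⊕ Fin 3) ℂ) ∈ frameSet (fun v => v ≠ 0) ∧
      (∀ A ∈ frameSet (fun v => v ≠ 0), ∀ B ∈ frameSet (fun v => v ≠ 0),
        A * B ∈ frameSet (fun v => v ≠ 0)) ∧
      (∀ A ∈ frameSet (fun v => v ≠ 0), IsUnit A ∧ A⁻¹ ∈ frameSet (fun v => v ≠ 0))) ∧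
    ((1 : Matrix (Fin 1 ⊕ Fin 3) (Fin 1 ⊕ Fin 3) ℂ) ∈ frameSet (fun v => 0 < v) ∧
      (∀ A ∈ frameSet (fun v => 0 < v), ∀ B ∈ frameSet (fun v => 0 < v),
        A * B ∈ frameSet (fun v => 0 < v)) ∧
      (∀ A ∈ frameSet (fun v => 0 < v), IsUnit A ∧ A⁻¹ ∈ frameSet (fun v => 0 < v))) :=
  ⟨⟨one_mem_frameSet one_ne_zero,
      fun _ hA _ hB => mul_mem_frameSet (fun _ _ => mul_ne_zero) hA hB,
      fun _ => isUnit_and_inv_mem_frameSet (fun _ => id) (fun _ => inv_ne_zero)⟩,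
    ⟨one_mem_frameSet one_pos,
      fun _ hA _ hB => mul_mem_frameSet (fun _ _ => mul_pos) hA hB,
      fun _ => isUnit_and_inv_mem_frameSet (fun _ => ne_of_gt) (fun _ => inv_pos_of_pos)⟩⟩
end

section
/- Let H be the group of complex 4×4 matrices which in (1+3)×(1+3) block form equal [[v,0],[c,k]] with v > 0, k ∈ K, and c ∈ ℂ³ satisfying Re c = k e₁ − v e₁, and let H₀ ⊆ H be the subgroup of elements with c = 0 and k e₁ = v e₁ (equivalently, the matrices [[v,0,0,0],[0,v,a,a²/(2v)],[0,0,1,a/v],[0,0,0,1/v]] with v > 0, a ∈ ℝ). If b ∈ H₀ satisfies a⁻¹ b a ∈ H₀ for every a ∈ H, then b is the identity matrix. (Equivalently: the left action of H₀ on the homogeneous space H/H₀ is effective.) -/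
/-!
The imaginary shears `[[1,0],[i y,1]]`, `y ∈ ℝ³`, lie in `H` (their `c = i y` has real part
`0 = e₁ − e₁`). If `b = diag(v, k) ∈ H₀` and `a⁻¹ b a = diag(v', k')`, comparing the blocks of
`b a = a (a⁻¹ b a)` gives `v' = v` and `k (i y) = (i y) v`. Hence `k = v • 1`, so `det k = v³ = 1`
forces `v = 1` and `b = 1`.
-/

open Matrix

/-- The frame group `H`: complex 4×4 matrices in block form `[[v,0],[c,k]]` with
`v > 0`, `k ∈ K`, and `Re c = k e₁ − v e₁`. -/
def Hset : Set (Matrix (Fin 1 ⊕ Fin 3) (Fin 1 ⊕ Fin 3) ℂ) :=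
  {M | ∃ (v : ℝ) (c : Fin 3 → ℂ) (k : Matrix (Fin 3) (Fin 3) ℝ),
    0 < v ∧ k ∈ Kgroup ∧
    (∀ i : Fin 3, (c i).re = k.mulVec e₁ i - v * e₁ i) ∧
    M = Matrix.fromBlocks (Matrix.of fun _ _ => (v : ℂ)) 0
          (Matrix.of fun i _ => c i) (k.map (fun r => (r : ℂ)))}

/-- The isotropy subgroup `H₀ ⊆ H`: elements with `c = 0` and `k e₁ = v e₁`. -/
def H₀set : Set (Matrix (Fin 1 ⊕ Fin 3) (Fin 1 ⊕ Fin 3) ℂ) :=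
  {M | ∃ (v : ℝ) (k : Matrix (Fin 3) (Fin 3) ℝ),
    0 < v ∧ k ∈ Kgroup ∧ k.mulVec e₁ = v • e₁ ∧
    M = Matrix.fromBlocks (Matrix.of fun _ _ => (v : ℂ)) 0 0
          (k.map (fun r => (r : ℂ)))}

open Complex

theorem mul_eq_mul_of_fromBlocks_mul_shear_eq {l m R : Type*} [Fintype l] [Fintype m]
    [DecidableEq l] [DecidableEq m] [Ring R] {A A' : Matrix l l R} {D D' : Matrix m m R}
    {C : Matrix m l R}
    (h : fromBlocks A 0 0 D * fromBlocks 1 0 C 1 = fromBlocks 1 0 C 1 * fromBlocks A' 0 0 D') :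
    D * C = C * A := by
  simp only [fromBlocks_multiply, Matrix.mul_zero, Matrix.zero_mul, Matrix.mul_one,
    Matrix.one_mul, add_zero, zero_add, fromBlocks_inj] at h
  rw [h.2.2.1, h.1]

theorem mulVec_eq_smul_of_map_ofReal_mul_eq {n : Type*} [Fintype n] {k : Matrix n n ℝ} {v : ℝ}
    {y : n → ℝ}
    (h : k.map ofReal * of (fun i (_ : Fin 1) => I * y i) =
      of (fun i (_ : Fin 1) => I * y i) * (of fun _ _ => (v : ℂ) : Matrix (Fin 1) (Fin 1) ℂ)) :
    k *ᵥ y = v • y := by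
  funext i
  have hi := congrFun₂ h i 0
  simp only [mul_apply, map_apply, of_apply, Fin.sum_univ_one] at hi
  have hI : I * ((k *ᵥ y) i : ℂ) = I * ((v • y) i : ℂ) := by
    simp only [mulVec, dotProduct, Pi.smul_apply, smul_eq_mul, ofReal_sum, ofReal_mul,
      Finset.mul_sum]
    rw [show I * (v * y i) = I * y i * v by ring, ← hi]
    exact Finset.sum_congr rfl fun _ _ => mul_left_comm _ _ _
  exact_mod_cast mul_left_cancel₀ I_ne_zero hI

theorem of_const_one_eq_one {ι R : Type*} [Subsingleton ι] [DecidableEq ι] [Zero R] [One R] :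
    (of fun _ _ => 1 : Matrix ι ι R) = 1 := by
  ext i j
  obtain rfl := Subsingleton.elim i j
  exact (one_apply_eq i).symm

theorem one_mem_Kgroup : (1 : Matrix (Fin 3) (Fin 3) ℝ) ∈ Kgroup := by
  simp [Kgroup]

def imagShear (y : Fin 3 → ℝ) : Matrix (Fin 1 ⊕ Fin 3) (Fin 1 ⊕ Fin 3) ℂ :=
  fromBlocks 1 0 (of fun i _ => I * y i) 1

theorem imagShear_mem_Hset (y : Fin 3 → ℝ) : imagShear y ∈ Hset := by
  refine ⟨1, fun i => I * y i, 1, one_pos, one_mem_Kgroup, fun i => by simp, ?_⟩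
  simp only [imagShear, ofReal_one, of_const_one_eq_one,
    Matrix.map_one ofReal ofReal_zero ofReal_one]

theorem isUnit_det_imagShear (y : Fin 3 → ℝ) : IsUnit (imagShear y).det := by
  simp [imagShear]

/-- If `b ∈ H₀` satisfies `a⁻¹ b a ∈ H₀` for every `a ∈ H`, then `b = 1`;
i.e. the left action of `H₀` on the homogeneous space `H/H₀` is effective. -/
theorem H₀_acts_effectively_on_H_mod_H₀
    (b : Matrix (Fin 1 ⊕ Fin 3) (Fin 1 ⊕ Fin 3) ℂ) (hb : b ∈ H₀set)
    (h : ∀ a ∈ Hset, a⁻¹ * b * a ∈ H₀set) :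
    b = 1 := by
  obtain ⟨v, k, hv, hk, -, rfl⟩ := hb
  have hk_scalar : ∀ y, k *ᵥ y = v • y := by
    intro y
    obtain ⟨v', k', -, -, -, hconj⟩ := h _ (imagShear_mem_Hset y)
    have hcomm := congrArg (imagShear y * ·) hconj
    simp only [← mul_assoc, mul_nonsing_inv _ (isUnit_det_imagShear y), one_mul] at hcomm
    exact mulVec_eq_smul_of_map_ofReal_mul_eq (mul_eq_mul_of_fromBlocks_mul_shear_eq hcomm)
  have hk_eq : k = v • 1 :=
    ext_iff_mulVec.2 fun y => by rw [hk_scalar, smul_mulVec, one_mulVec]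
  have hv_eq : v = 1 := by
    have hdet := hk.2
    rw [hk_eq, det_smul, det_one, Fintype.card_fin, mul_one] at hdet
    exact (pow_eq_one_iff_of_nonneg hv.le three_ne_zero).1 hdet
  subst hk_eq hv_eq
  simp [of_const_one_eq_one]
end

section
/- The group SO(2,1) = {g ∈ GL(3,ℝ) : gᵀJg = J and det g = 1}, where J = diag(1,1,−1), regarded as a topological subspace of the 3×3 real matrices, has exactly two connected components. -/
open Matrix

/-- `J = diag(1,1,−1)`. -/
def Jmat : Matrix (Fin 3) (Fin 3) ℝ := !![1, 0, 0; 0, 1, 0; 0, 0, -1]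

/-!
For `g ∈ SO(2,1)` the relation `gᵀ J g = J` gives `g₂₂² = 1 + g₀₂² + g₁₂² ≥ 1`, so the sign of
`g₂₂` splits the group into two clopen pieces. Each piece is connected: an element with
`g₂₂ > 0` is the boost carrying `e₂` to its last column, followed by a rotation fixing `e₂`, so
that piece is a continuous image of `ℝ³`; left multiplication by `diag(-1, 1, -1)` swaps the
two pieces.
-/

open Real

local notation "M₃" => Matrix (Fin 3) (Fin 3) ℝ

theorem exists_cos_eq_and_sin_eq {x y : ℝ} (h : x ^ 2 + y ^ 2 = 1) :
    ∃ θ, cos θ = x ∧ sin θ = y := by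
  set z : ℂ := ⟨x, y⟩
  have hz : ‖z‖ = 1 := by
    rw [Complex.norm_def, Complex.normSq_apply, ← sq, ← sq, h, Real.sqrt_one]
  refine ⟨z.arg, ?_, ?_⟩
  · rw [Complex.cos_arg (norm_ne_zero_iff.1 (hz.trans_ne one_ne_zero)), hz, div_one]
  · rw [Complex.sin_arg, hz, div_one]

theorem card_connectedComponents_eq_two_of_isClopen {X : Type*} [TopologicalSpace X]
    {U : Set X} (hU : IsClopen U) (hUc : IsConnected U) (hUc' : IsConnected Uᶜ) :
    Nat.card (ConnectedComponents X) = 2 := by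
  have hf : Continuous U.boolIndicator := (continuous_boolIndicator_iff_isClopen U).2 hU
  have hcomp {V : Set X} (hV : IsPreconnected V) {x y : X} (hx : x ∈ V) (hy : y ∈ V) :
      (x : ConnectedComponents X) = y :=
    ConnectedComponents.coe_eq_coe.2 (connectedComponent_eq (hV.subset_connectedComponent hx hy))
  have hbij : Function.Bijective hf.connectedComponentsLift := by
    refine ⟨fun c d hcd => ?_, fun b => ?_⟩
    · obtain ⟨x, rfl⟩ := ConnectedComponents.surjective_coe c
      obtain ⟨y, rfl⟩ := ConnectedComponents.surjective_coe d
      simp only [hf.connectedComponentsLift_apply_coe, Set.boolIndicator] at hcd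
      by_cases hx : x ∈ U
      · have hy : y ∈ U := by by_contra hy; simp [hx, hy] at hcd
        exact hcomp hUc.isPreconnected hx hy
      · have hy : y ∉ U := by intro hy; simp [hx, hy] at hcd
        exact hcomp hUc'.isPreconnected hx hy
    · cases b
      · obtain ⟨x, hx⟩ := hUc'.nonempty
        exact ⟨x, by simpa [Set.boolIndicator] using hx⟩
      · obtain ⟨x, hx⟩ := hUc.nonempty
        exact ⟨x, by simpa [Set.boolIndicator] using hx⟩
  simp [Nat.card_eq_of_bijective _ hbij]

def SO21 : Submonoid M₃ where
  carrier := {g | gᵀ * Jmat * g = Jmat ∧ g.det = 1}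
  mul_mem' := by
    rintro g h ⟨hg, hg'⟩ ⟨hh, hh'⟩
    refine ⟨?_, by rw [det_mul, hg', hh', mul_one]⟩
    rw [transpose_mul, show hᵀ * gᵀ * Jmat * (g * h) = hᵀ * (gᵀ * Jmat * g) * h by noncomm_ring,
      hg, hh]
  one_mem' := by simp

namespace SO21

variable {g : M₃}

theorem apply_mul_apply_of_mem (hg : g ∈ SO21) (i j : Fin 3) :
    g 0 i * g 0 j + g 1 i * g 1 j - g 2 i * g 2 j = Jmat i j := by
  have h := congrFun (congrFun hg.1 i) j
  simp only [mul_apply, Fin.sum_univ_three, transpose_apply, Jmat] at h ⊢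
  fin_cases i <;> fin_cases j <;> simp at h ⊢ <;> linarith

theorem apply_two_two_sq (hg : g ∈ SO21) : g 2 2 ^ 2 = 1 + g 0 2 ^ 2 + g 1 2 ^ 2 := by
  have h := apply_mul_apply_of_mem hg 2 2
  simp only [Jmat, of_apply, cons_val] at h
  linear_combination -h

theorem apply_two_two_ne_zero (hg : g ∈ SO21) : g 2 2 ≠ 0 := by
  intro h
  have := apply_two_two_sq hg
  rw [h] at this
  nlinarith [sq_nonneg (g 0 2), sq_nonneg (g 1 2)]

noncomputable def rotation (θ : ℝ) : M₃ := !![cos θ, -sin θ, 0; sin θ, cos θ, 0; 0, 0, 1]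

theorem rotation_mem (θ : ℝ) : rotation θ ∈ SO21 := by
  have h := sin_sq_add_cos_sq θ
  constructor
  · ext i j
    fin_cases i <;> fin_cases j <;> simp [rotation, Jmat, mul_apply, Fin.sum_univ_three] <;>
      linarith
  · simp [rotation, det_fin_three]
    linarith

theorem continuous_rotation : Continuous rotation := by
  refine continuous_matrix fun i j => ?_
  fin_cases i <;> fin_cases j <;> simp [rotation] <;> fun_prop

theorem exists_eq_rotation_of_mulVec (hg : g ∈ SO21)
    (he : g *ᵥ Pi.single 2 1 = Pi.single 2 1) : ∃ θ, g = rotation θ := by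
  have h02 : g 0 2 = 0 := by simpa using congrFun he 0
  have h12 : g 1 2 = 0 := by simpa using congrFun he 1
  have h22 : g 2 2 = 1 := by simpa using congrFun he 2
  have e := apply_mul_apply_of_mem hg
  have h20 : g 2 0 = 0 := by simpa [h02, h12, h22, Jmat] using e 0 2
  have h21 : g 2 1 = 0 := by simpa [h02, h12, h22, Jmat] using e 1 2
  have e00 := e 0 0
  have e01 := e 0 1
  simp [Jmat, h20, h21] at e00 e01
  have hdet := hg.2
  simp [det_fin_three, h02, h12, h22, h20, h21] at hdet
  have h11 : g 1 1 = g 0 0 := by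
    linear_combination (-(g 1 1)) * e00 + (g 0 0) * hdet + (g 1 0) * e01
  have h01 : g 0 1 = -g 1 0 := by
    linear_combination (-(g 0 1)) * e00 + (g 0 0) * e01 - (g 1 0) * hdet
  obtain ⟨θ, hcos, hsin⟩ := exists_cos_eq_and_sin_eq (x := g 0 0) (y := g 1 0)
    (by linear_combination e00)
  refine ⟨θ, ?_⟩
  ext i j
  fin_cases i <;> fin_cases j <;> simp [rotation, hcos, hsin, h01, h11, h02, h12, h20, h21, h22]

-- The boost carrying `e₂` to the unit timelike vector `(a, b, c)`.
noncomputable def boost (a b c : ℝ) : M₃ :=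
  !![1 + a ^ 2 / (1 + c), a * b / (1 + c), a;
     a * b / (1 + c), 1 + b ^ 2 / (1 + c), b;
     a, b, c]

section boost

variable {a b c : ℝ} (hc : c ^ 2 = 1 + a ^ 2 + b ^ 2) (hc₁ : 1 + c ≠ 0)
include hc hc₁

theorem boost_mem : boost a b c ∈ SO21 := by
  constructor
  · ext i j
    fin_cases i <;> fin_cases j <;> simp [boost, Jmat, mul_apply, Fin.sum_univ_three] <;>
      field_simp <;> grind
  · simp [boost, det_fin_three]
    field_simp
    grind

theorem boost_mul_boost_neg : boost a b c * boost (-a) (-b) c = 1 := by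
  ext i j
  fin_cases i <;> fin_cases j <;> simp [boost, mul_apply, Fin.sum_univ_three] <;>
    field_simp <;> grind

end boost

theorem continuous_boost_sqrt :
    Continuous fun p : ℝ × ℝ => boost p.1 p.2 (√(1 + p.1 ^ 2 + p.2 ^ 2)) := by
  have h (p : ℝ × ℝ) : 1 + √(1 + p.1 ^ 2 + p.2 ^ 2) ≠ 0 := by positivity
  refine continuous_matrix fun i j => ?_
  fin_cases i <;> fin_cases j <;> simp [boost] <;> fun_prop (disch := exact h)

theorem exists_eq_boost_mul_rotation (hg : g ∈ SO21) (hpos : 0 < g 2 2) :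
    ∃ a b θ, g = boost a b (√(1 + a ^ 2 + b ^ 2)) * rotation θ := by
  set a := g 0 2
  set b := g 1 2
  set c := g 2 2
  have hc : c ^ 2 = 1 + a ^ 2 + b ^ 2 := apply_two_two_sq hg
  have hc₁ : 1 + c ≠ 0 := by positivity
  have hc_sqrt : c = √(1 + a ^ 2 + b ^ 2) := by rw [← hc, Real.sqrt_sq hpos.le]
  have hcol : g *ᵥ Pi.single 2 1 = boost a b c *ᵥ Pi.single 2 1 := by
    ext i; fin_cases i <;> simp [boost, a, b, c]
  have hinv : boost (-a) (-b) c * boost a b c = 1 := by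
    simpa using boost_mul_boost_neg (a := -a) (b := -b) (by simpa using hc) hc₁
  set k := boost (-a) (-b) c * g
  have hk : k ∈ SO21 := SO21.mul_mem (boost_mem (by simpa using hc) hc₁) hg
  have hke : k *ᵥ Pi.single 2 1 = Pi.single 2 1 := by
    rw [← mulVec_mulVec, hcol, mulVec_mulVec, hinv, one_mulVec]
  obtain ⟨θ, hθ⟩ := exists_eq_rotation_of_mulVec hk hke
  refine ⟨a, b, θ, ?_⟩
  rw [← hc_sqrt, ← hθ, ← mul_assoc, boost_mul_boost_neg hc hc₁, one_mul]

theorem isConnected_setOf_pos : IsConnected {g : SO21 | 0 < (g : M₃) 2 2} := by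
  let f (p : ℝ × ℝ × ℝ) : M₃ := boost p.1 p.2.1 (√(1 + p.1 ^ 2 + p.2.1 ^ 2)) * rotation p.2.2
  have hf : Continuous f :=
    (continuous_boost_sqrt.comp (continuous_fst.prodMk continuous_snd.fst)).mul
      (continuous_rotation.comp continuous_snd.snd)
  have hmem (p) : f p ∈ SO21 :=
    SO21.mul_mem (boost_mem (Real.sq_sqrt (by positivity)) (by positivity)) (rotation_mem _)
  have hrange : {g : SO21 | 0 < (g : M₃) 2 2} = Set.range fun p => (⟨f p, hmem p⟩ : SO21) := by
    ext ⟨g, hg⟩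
    constructor
    · intro hpos
      obtain ⟨a, b, θ, rfl⟩ := exists_eq_boost_mul_rotation hg hpos
      exact ⟨(a, b, θ), rfl⟩
    · rintro ⟨p, hp⟩
      rw [Set.mem_ofPred_eq, ← Subtype.ext_iff.1 hp]
      simp [f, boost, rotation]
      positivity
  rw [hrange]
  exact isConnected_range (hf.subtype_mk hmem)

def timeFlip : M₃ := !![-1, 0, 0; 0, 1, 0; 0, 0, -1]

theorem timeFlip_mem : timeFlip ∈ SO21 := by
  constructor
  · ext i j; fin_cases i <;> fin_cases j <;> simp [timeFlip, Jmat, mul_apply, Fin.sum_univ_three]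
  · simp [timeFlip, det_fin_three]

theorem timeFlip_mul_timeFlip : timeFlip * timeFlip = 1 := by
  simp [timeFlip, one_fin_three]

theorem timeFlip_mul_apply_two_two (g : M₃) : (timeFlip * g) 2 2 = -g 2 2 := by
  simp [timeFlip, mul_apply, Fin.sum_univ_three]

theorem isConnected_setOf_neg : IsConnected {g : SO21 | (g : M₃) 2 2 < 0} := by
  let t : SO21 := ⟨timeFlip, timeFlip_mem⟩
  have ht : t * t = 1 := Subtype.ext timeFlip_mul_timeFlip
  have himage : {g : SO21 | (g : M₃) 2 2 < 0} = (t * ·) '' {g : SO21 | 0 < (g : M₃) 2 2} := by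
    ext g
    constructor
    · intro hg
      refine ⟨t * g, ?_, show t * (t * g) = g by rw [← mul_assoc, ht, one_mul]⟩
      simpa [t, timeFlip_mul_apply_two_two] using hg
    · rintro ⟨h, hh, rfl⟩
      simpa [t, timeFlip_mul_apply_two_two] using hh
  rw [himage]
  exact isConnected_setOf_pos.image _ (continuous_const_mul t).continuousOn

theorem compl_setOf_pos : {g : SO21 | 0 < (g : M₃) 2 2}ᶜ = {g : SO21 | (g : M₃) 2 2 < 0} := by
  ext g
  simpa only [Set.mem_compl_iff, Set.mem_ofPred_eq, not_lt] using
    (apply_two_two_ne_zero g.2).le_iff_lt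

theorem isClopen_setOf_pos : IsClopen {g : SO21 | 0 < (g : M₃) 2 2} := by
  have hcont : Continuous fun g : SO21 => (g : M₃) 2 2 :=
    (continuous_apply_apply 2 2).comp continuous_subtype_val
  refine ⟨?_, isOpen_lt continuous_const hcont⟩
  rw [← isOpen_compl_iff, compl_setOf_pos]
  exact isOpen_lt hcont continuous_const

end SO21

/-- The Lorentz group `SO(2,1)`, regarded as a topological subspace of the real
3×3 matrices, has exactly two connected components. -/
theorem SO21_has_two_connected_components :
    Nat.card (ConnectedComponents
      {g : Matrix (Fin 3) (Fin 3) ℝ // gᵀ * Jmat * g = Jmat ∧ g.det = 1}) = 2 := by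
  change Nat.card (ConnectedComponents SO21) = 2
  refine card_connectedComponents_eq_two_of_isClopen SO21.isClopen_setOf_pos
    SO21.isConnected_setOf_pos ?_
  rw [SO21.compl_setOf_pos]
  exact SO21.isConnected_setOf_neg
end
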